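/- For real y > 0 and real x, the Voigt function K(x,y) = (y/π)·∫_{-∞}^{∞} exp(-t²)/(y² + (x-t)²) dt and the function L(x,y) = (1/π)·∫_{-∞}^{∞} exp(-t²)(x-t)/(y² + (x-t)²) dt satisfy w(x + iy) = K(x,y) + i·L(x,y). -/

import Mathlib

/-!
With `z = x + iy`, `K + iL = (1/π) ∫ e^{-t²} · i/(z - t) dt`. For `Im z > 0` the Cauchy kernel is a
Laplace transform, `i/(z - t) = ∫₀^∞ e^{is(z - t)} ds`, so Fubini and the Fourier transform of the
Gaussian turn the integral into `√π ∫₀^∞ e^{isz - s²/4} ds`; substituting `s = 2u` and completing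
the square gives `2√π e^{-z²} ∫₀^∞ e^{-(u - iz)²} du`. Finally
`∫₀^∞ e^{-(u - c)²} du = √π/2 + ∫₀^c e^{-v²} dv` for every complex `c` (differentiate in the shift
along the segment `[0, c]` and swap the two integrals), which for `c = iz` is
`√π/2 + i ∫₀^z e^{t²} dt`.
-/

open MeasureTheory

/-- Straight-path integral of exp(t²) from 0 to z. -/
noncomputable def lineInt (z : ℂ) : ℂ := ∫ t in (0:ℝ)..1, z * Complex.exp ((t * z)^2)

/-- The complex error (Faddeeva) function. -/
noncomputable def w (z : ℂ) : ℂ :=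
  Complex.exp (-z^2) * (1 + (2 * Complex.I / (Real.sqrt Real.pi : ℂ)) * lineInt z)
/-- The Voigt function. -/
noncomputable def K (x y : ℝ) : ℝ :=
  (y / Real.pi) * ∫ t : ℝ, Real.exp (-t^2) / (y^2 + (x - t)^2)

/-- The L-function. -/
noncomputable def L (x y : ℝ) : ℝ :=
  (1 / Real.pi) * ∫ t : ℝ, Real.exp (-t^2) * (x - t) / (y^2 + (x - t)^2)

open Set Filter Topology Complex
open scoped Real

lemma norm_cexp_neg_sq_sub_le (u : ℝ) (c : ℂ) :
    ‖cexp (-(u - c) ^ 2)‖ ≤ Real.exp (-u ^ 2 / 2) * Real.exp (‖c‖ ^ 2) := by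
  have hre : (-((u : ℂ) - c) ^ 2).re = -((u - c.re) ^ 2 - c.im ^ 2) := by
    simp only [neg_re, sq, mul_re, sub_re, ofReal_re, sub_im, ofReal_im]
    ring
  rw [norm_exp, hre, ← Real.exp_add, Real.exp_le_exp, Complex.sq_norm, normSq_apply]
  nlinarith [sq_nonneg (u - 2 * c.re)]

lemma norm_sub_mul_cexp_neg_sq_sub_le (u : ℝ) (c : ℂ) :
    ‖(u - c) * cexp (-(u - c) ^ 2)‖ ≤
      (|u| + ‖c‖) * Real.exp (-u ^ 2 / 2) * Real.exp (‖c‖ ^ 2) := by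
  rw [norm_mul, mul_assoc]
  have hsub : ‖(u : ℂ) - c‖ ≤ |u| + ‖c‖ :=
    (norm_sub_le _ _).trans_eq (by rw [norm_real, Real.norm_eq_abs])
  exact mul_le_mul hsub (norm_cexp_neg_sq_sub_le u c) (norm_nonneg _) (by positivity)

lemma integrable_abs_add_mul_exp_neg_sq_div_two (r : ℝ) :
    Integrable fun u : ℝ => (|u| + r) * Real.exp (-u ^ 2 / 2) := by
  have hexp : ∀ u : ℝ, Real.exp (-u ^ 2 / 2) = Real.exp (-(1 / 2) * u ^ 2) := fun u => by ring_nf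
  simp_rw [hexp, add_mul]
  refine Integrable.add ?_ ((integrable_exp_neg_mul_sq (by norm_num)).const_mul r)
  simpa [abs_mul] using (integrable_mul_exp_neg_mul_sq (b := 1 / 2) (by norm_num)).norm

lemma integrable_cexp_neg_sq_sub (c : ℂ) : Integrable fun u : ℝ => cexp (-(u - c) ^ 2) := by
  convert integrable_cexp_quadratic' (b := -1) (by norm_num) (2 * c) (-c ^ 2) using 2 with u
  ring_nf

lemma integrable_sub_mul_cexp_neg_sq_sub (c : ℂ) :
    Integrable fun u : ℝ => (u - c) * cexp (-(u - c) ^ 2) :=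
  ((integrable_abs_add_mul_exp_neg_sq_div_two ‖c‖).mul_const _).mono'
    (by fun_prop) (ae_of_all _ fun u => norm_sub_mul_cexp_neg_sq_sub_le u c)

lemma tendsto_cexp_neg_sq_sub_atTop (c : ℂ) :
    Tendsto (fun u : ℝ => cexp (-(u - c) ^ 2)) atTop (𝓝 0) := by
  have hbot : Tendsto (fun u : ℝ => -u ^ 2 / 2) atTop atBot :=
    (tendsto_neg_atTop_atBot.comp (tendsto_pow_atTop two_ne_zero)).atBot_div_const two_pos
  have hbound := (Real.tendsto_exp_atBot.comp hbot).mul_const (Real.exp (‖c‖ ^ 2))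
  rw [zero_mul] at hbound
  exact squeeze_zero_norm (norm_cexp_neg_sq_sub_le · c) hbound

lemma integral_Ioi_sub_mul_cexp_neg_sq_sub (c : ℂ) :
    ∫ u in Ioi (0 : ℝ), (u - c) * cexp (-(u - c) ^ 2) = cexp (-c ^ 2) / 2 := by
  have hderiv (u : ℝ) : HasDerivAt (fun v : ℝ => -cexp (-(v - c) ^ 2) / 2)
      ((u - c) * cexp (-(u - c) ^ 2)) u := by
    have h : HasDerivAt (fun w : ℂ => -cexp (-(w - c) ^ 2) / 2)
        ((u - c) * cexp (-(u - c) ^ 2)) u :=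
      ((((hasDerivAt_id (u : ℂ)).sub_const c).pow 2).neg.cexp.neg.div_const 2).congr_deriv
        (by simp only [id, Pi.neg_apply, Pi.pow_apply]; ring)
    exact h.comp_ofReal
  have hlim : Tendsto (fun v : ℝ => -cexp (-(v - c) ^ 2) / 2) atTop (𝓝 0) := by
    simpa using ((tendsto_cexp_neg_sq_sub_atTop c).neg.div_const 2)
  rw [integral_Ioi_of_hasDerivAt_of_tendsto' (fun u _ => hderiv u)
    (integrable_sub_mul_cexp_neg_sq_sub c).integrableOn hlim]
  simp [neg_div]

lemma ofReal_pi_div_one_cpow_one_half : ((π : ℂ) / 1) ^ (1 / 2 : ℂ) = (√π : ℂ) := by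
  rw [div_one, Real.sqrt_eq_rpow, ofReal_cpow Real.pi_pos.le]
  norm_num

lemma integral_Ioi_cexp_neg_sq : ∫ u in Ioi (0 : ℝ), cexp (-(u : ℂ) ^ 2) = (√π : ℂ) / 2 := by
  have h := integral_gaussian_complex_Ioi (b := 1) (by simp)
  rw [ofReal_pi_div_one_cpow_one_half] at h
  simpa using h

lemma cexp_neg_sq_sub_sub_cexp_neg_sq (u : ℝ) (c : ℂ) :
    cexp (-(u - c) ^ 2) - cexp (-(u : ℂ) ^ 2) =
      ∫ t in (0 : ℝ)..1, 2 * c * ((u - t * c) * cexp (-(u - t * c) ^ 2)) := by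
  have hderiv (t : ℝ) : HasDerivAt (fun s : ℝ => cexp (-(u - s * c) ^ 2))
      (2 * c * ((u - t * c) * cexp (-(u - t * c) ^ 2))) t := by
    have h : HasDerivAt (fun s : ℂ => cexp (-(u - s * c) ^ 2))
        (2 * c * ((u - t * c) * cexp (-(u - t * c) ^ 2))) t :=
      ((((hasDerivAt_id (t : ℂ)).mul_const c).const_sub (u : ℂ)).pow 2).neg.cexp.congr_deriv
        (by simp only [id, Pi.neg_apply, Pi.pow_apply]; ring)
    exact h.comp_ofReal
  rw [intervalIntegral.integral_eq_sub_of_hasDerivAt (fun t _ => hderiv t)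
    (Continuous.intervalIntegrable (by fun_prop) _ _)]
  simp

lemma integrable_uncurry_mul_sub_mul_cexp_neg_sq_sub (c : ℂ) :
    Integrable
      (Function.uncurry fun (u t : ℝ) => 2 * c * ((u - t * c) * cexp (-(u - t * c) ^ 2)))
      ((volume.restrict (Ioi 0)).prod (volume.restrict (Ioc 0 1))) := by
  have hdom : Integrable (fun u : ℝ =>
      2 * ‖c‖ * ((|u| + ‖c‖) * Real.exp (-u ^ 2 / 2) * Real.exp (‖c‖ ^ 2)))
      (volume.restrict (Ioi 0)) :=
    (((integrable_abs_add_mul_exp_neg_sq_div_two ‖c‖).mul_const _).const_mul _).restrict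
  have hone : Integrable (fun _ : ℝ => (1 : ℝ)) (volume.restrict (Ioc 0 1)) :=
    integrable_const_iff.2 (Or.inr (by simp [isFiniteMeasure_restrict]))
  refine (hdom.mul_prod hone).mono' (Continuous.aestronglyMeasurable (by fun_prop)) ?_
  rw [Measure.prod_restrict]
  filter_upwards [ae_restrict_mem (measurableSet_Ioi.prod measurableSet_Ioc)]
    with ⟨u, t⟩ hut
  obtain ⟨-, ht0, ht1⟩ := hut
  have htc : ‖(t : ℂ) * c‖ ≤ ‖c‖ := by
    rw [norm_mul, norm_real, Real.norm_of_nonneg ht0.le]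
    exact mul_le_of_le_one_left (norm_nonneg c) ht1
  simp only [Function.uncurry_apply_pair, mul_one]
  rw [norm_mul, norm_mul, norm_ofNat]
  gcongr
  refine (norm_sub_mul_cexp_neg_sq_sub_le u (t * c)).trans ?_
  gcongr

lemma integral_Ioi_cexp_neg_sq_sub (c : ℂ) :
    ∫ u in Ioi (0 : ℝ), cexp (-(u - c) ^ 2) =
      (√π : ℂ) / 2 + ∫ t in (0 : ℝ)..1, c * cexp (-(t * c) ^ 2) := by
  have hdiff : ∫ u in Ioi (0 : ℝ), (cexp (-(u - c) ^ 2) - cexp (-(u : ℂ) ^ 2)) =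
      ∫ t in (0 : ℝ)..1, c * cexp (-(t * c) ^ 2) := by
    simp_rw [cexp_neg_sq_sub_sub_cexp_neg_sq, intervalIntegral.integral_of_le zero_le_one]
    rw [integral_integral_swap (integrable_uncurry_mul_sub_mul_cexp_neg_sq_sub c)]
    refine setIntegral_congr_fun measurableSet_Ioc fun t _ => ?_
    rw [integral_const_mul, integral_Ioi_sub_mul_cexp_neg_sq_sub]
    ring_nf
  have hgauss : IntegrableOn (fun u : ℝ => cexp (-(u : ℂ) ^ 2)) (Ioi 0) := by
    simpa using (integrable_cexp_neg_sq_sub 0).integrableOn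
  rw [← hdiff, integral_sub (integrable_cexp_neg_sq_sub c).integrableOn hgauss,
    integral_Ioi_cexp_neg_sq]
  ring

lemma integral_Ioi_cexp_I_mul_mul (w : ℂ) (hw : 0 < w.im) :
    ∫ s in Ioi (0 : ℝ), cexp (I * w * s) = I / w := by
  have hw0 : w ≠ 0 := fun h => by simp [h] at hw
  rw [integral_exp_mul_complex_Ioi (by simpa using hw)]
  field_simp
  simp

lemma integral_cexp_neg_sq_mul_I_div_sub (z : ℂ) (hz : 0 < z.im) :
    ∫ t : ℝ, cexp (-(t : ℂ) ^ 2) * (I / (z - t)) =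
      √π * ∫ s in Ioi (0 : ℝ), cexp (I * z * s - s ^ 2 / 4) := by
  have hint : Integrable
      (Function.uncurry fun (t s : ℝ) => cexp (-(t : ℂ) ^ 2) * cexp (I * (z - t) * s))
      (volume.prod (volume.restrict (Ioi 0))) := by
    refine ((integrable_exp_neg_mul_sq one_pos).mul_prod (exp_neg_integrableOn_Ioi 0 hz)).mono'
      (Continuous.aestronglyMeasurable (by fun_prop)) (ae_of_all _ fun ⟨t, s⟩ => le_of_eq ?_)
    simp [norm_exp, ← ofReal_pow]
  have hfourier (s : ℝ) : ∫ t : ℝ, cexp (-(t : ℂ) ^ 2) * cexp (I * (z - t) * s) =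
      √π * cexp (I * z * s - s ^ 2 / 4) := by
    have hsplit (t : ℝ) : cexp (-(t : ℂ) ^ 2) * cexp (I * (z - t) * s) =
        cexp (I * z * s) * (cexp (I * (-s : ℂ) * t) * cexp (-1 * (t : ℂ) ^ 2)) := by
      simp only [← Complex.exp_add]
      ring_nf
    simp_rw [hsplit]
    rw [integral_const_mul, fourierIntegral_gaussian (by simp), ofReal_pi_div_one_cpow_one_half,
      mul_left_comm, ← Complex.exp_add]
    ring_nf
  calc ∫ t : ℝ, cexp (-(t : ℂ) ^ 2) * (I / (z - t))
      = ∫ t : ℝ, ∫ s in Ioi (0 : ℝ), cexp (-(t : ℂ) ^ 2) * cexp (I * (z - t) * s) := by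
        congr 1 with t
        rw [integral_const_mul, integral_Ioi_cexp_I_mul_mul _ (by simpa using hz)]
    _ = ∫ s in Ioi (0 : ℝ), ∫ t : ℝ, cexp (-(t : ℂ) ^ 2) * cexp (I * (z - t) * s) :=
        integral_integral_swap hint
    _ = √π * ∫ s in Ioi (0 : ℝ), cexp (I * z * s - s ^ 2 / 4) := by
        simp_rw [hfourier, integral_const_mul]

lemma integral_Ioi_cexp_I_mul_mul_sub_sq_div_four (z : ℂ) :
    ∫ s in Ioi (0 : ℝ), cexp (I * z * s - s ^ 2 / 4) =
      2 * cexp (-z ^ 2) * ∫ u in Ioi (0 : ℝ), cexp (-(u - I * z) ^ 2) := by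
  have h := integral_comp_mul_left_Ioi (fun s : ℝ => cexp (I * z * s - s ^ 2 / 4)) 0 two_pos
  have hsq (u : ℝ) : cexp (I * z * ((2 * u : ℝ) : ℂ) - ((2 * u : ℝ) : ℂ) ^ 2 / 4) =
      cexp (-z ^ 2) * cexp (-(u - I * z) ^ 2) := by
    rw [← Complex.exp_add]
    congr 1
    push_cast
    linear_combination z ^ 2 * I_sq
  simp only [mul_zero, hsq, integral_const_mul, real_smul] at h
  rw [mul_assoc, h]
  push_cast
  ring

lemma I_div_ofReal_add_ofReal_mul_I (a b : ℝ) :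
    I / (a + b * I) = ((b / (a ^ 2 + b ^ 2) : ℝ) : ℂ) + ((a / (a ^ 2 + b ^ 2) : ℝ) : ℂ) * I := by
  apply Complex.ext <;>
    simp only [div_re, div_im, normSq_add_mul_I, add_re, add_im, mul_re, mul_im, ofReal_re,
      ofReal_im, I_re, I_im] <;>
    ring

lemma integrable_cexp_neg_sq_mul_I_div_sub (z : ℂ) (hz : z.im ≠ 0) :
    Integrable fun t : ℝ => cexp (-(t : ℂ) ^ 2) * (I / (z - t)) := by
  refine ((integrable_exp_neg_mul_sq one_pos).div_const |z.im|).mono'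
    (Measurable.aestronglyMeasurable (by fun_prop)) (ae_of_all _ fun t => ?_)
  have hdist : |z.im| ≤ ‖z - t‖ := by simpa using abs_im_le_norm (z - t)
  calc ‖cexp (-(t : ℂ) ^ 2) * (I / (z - t))‖ = Real.exp (-1 * t ^ 2) * (1 / ‖z - t‖) := by
        rw [norm_mul, norm_div, norm_I, norm_exp]
        simp [← ofReal_pow]
    _ ≤ Real.exp (-1 * t ^ 2) * (1 / |z.im|) := by gcongr
    _ = Real.exp (-1 * t ^ 2) / |z.im| := mul_one_div _ _

lemma ofReal_K_add_I_mul_ofReal_L (x y : ℝ) (hy : y ≠ 0) :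
    (K x y : ℂ) + I * L x y = 1 / π * ∫ t : ℝ, cexp (-(t : ℂ) ^ 2) * (I / (x + y * I - t)) := by
  have hint := integrable_cexp_neg_sq_mul_I_div_sub (x + y * I) (by simpa using hy)
  rw [← integral_re_add_im hint]
  have hcauchy (t : ℝ) : cexp (-(t : ℂ) ^ 2) * (I / (x + y * I - t)) =
      ((y * (Real.exp (-t ^ 2) / (y ^ 2 + (x - t) ^ 2)) : ℝ) : ℂ) +
        ((Real.exp (-t ^ 2) * (x - t) / (y ^ 2 + (x - t) ^ 2) : ℝ) : ℂ) * I := by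
    have hsplit : (x : ℂ) + y * I - t = ((x - t : ℝ) : ℂ) + y * I := by push_cast; ring
    rw [hsplit, I_div_ofReal_add_ofReal_mul_I]
    push_cast
    ring
  simp only [hcauchy, RCLike.re_to_complex, RCLike.im_to_complex, RCLike.I_to_complex,
    RCLike.ofReal_eq_complex_ofReal, add_re, add_im, mul_I_re, mul_I_im, ofReal_re, ofReal_im,
    neg_zero, add_zero, zero_add, integral_const_mul, K, L]
  simp only [ofReal_mul, ofReal_div, ofReal_one]
  ring

lemma I_mul_lineInt (z : ℂ) :
    I * lineInt z = ∫ t in (0 : ℝ)..1, I * z * cexp (-(t * (I * z)) ^ 2) := by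
  rw [lineInt, ← intervalIntegral.integral_const_mul]
  congr 1 with t
  rw [mul_pow (t : ℂ) (I * z), mul_pow I, I_sq, mul_pow]
  ring_nf

theorem w_eq_K_add_iL (x y : ℝ) (hy : 0 < y) :
    w ((x:ℂ) + y * Complex.I) = (K x y : ℂ) + Complex.I * (L x y : ℂ) := by
  have hz : 0 < ((x : ℂ) + y * I).im := by simpa using hy
  have hsqrt : (√π : ℂ) ^ 2 = π := by norm_cast; exact Real.sq_sqrt Real.pi_pos.le
  rw [ofReal_K_add_I_mul_ofReal_L x y hy.ne', integral_cexp_neg_sq_mul_I_div_sub _ hz,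
    integral_Ioi_cexp_I_mul_mul_sub_sq_div_four, integral_Ioi_cexp_neg_sq_sub, ← I_mul_lineInt, w]
  rw [← hsqrt]
  field_simp
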